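/- arXiv:2311.13500 — 6 statements merged into one kernel-verified Lean document; each statement's English description precedes it below -/
import Mathlib

section
/- For a numerical semigroup S, the family 𝒜 consisting of ℕ together with all finite intersections ⋂ᵢ S/dᵢ with each dᵢ ∈ ℕ \ S is an arithmetic variety containing S, and it is the smallest arithmetic variety containing S. -/
/-- A numerical semigroup: a submonoid of (ℕ,+) with finite complement. -/
def IsNumericalSemigroup (S : Set ℕ) : Prop :=
  0 ∈ S ∧ (∀ a ∈ S, ∀ b ∈ S, a + b ∈ S) ∧ Sᶜ.Finite

/-- The quotient S/d = {x ∈ ℕ : d*x ∈ S}. -/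
def NumQuot (S : Set ℕ) (d : ℕ) : Set ℕ := {x | d * x ∈ S}

/-- The Frobenius number of S (for S ≠ ℕ): the maximum of the complement. -/
noncomputable def frob (S : Set ℕ) : ℕ := sSup Sᶜ

/-- The multiplicity of S: the least positive element. -/
noncomputable def mult (S : Set ℕ) : ℕ := sInf (S \ {0})

/-- T is an arithmetic extension of S if T = {x : d₁x,...,dₙx ∈ S} for some
positive integers d₁,...,dₙ. -/
def IsArithmeticExtension (S T : Set ℕ) : Prop :=
  ∃ D : Finset ℕ, D.Nonempty ∧ (∀ d ∈ D, 0 < d) ∧ T = {x | ∀ d ∈ D, d * x ∈ S}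

/-- An arithmetic variety: a nonempty family of numerical semigroups closed under
pairwise intersections and arithmetic extensions. -/
def IsArithmeticVariety (𝒜 : Set (Set ℕ)) : Prop :=
  𝒜.Nonempty ∧ (∀ S ∈ 𝒜, IsNumericalSemigroup S) ∧
    (∀ S ∈ 𝒜, ∀ T ∈ 𝒜, S ∩ T ∈ 𝒜) ∧
    (∀ S ∈ 𝒜, ∀ T : Set ℕ, IsArithmeticExtension S T → T ∈ 𝒜)

/-! Every member of the family is `⋂ c ∈ C, S/c` for some finite `C ⊆ ℕ`: a quotient `S/c` with
`c ∈ S` is all of `ℕ`, so such `c` may be added or dropped freely, and `ℕ` is the empty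
intersection. In this form the family is visibly closed under intersections (take `C₁ ∪ C₂`) and
under arithmetic extensions (`(S/c)/e = S/(ce)`, take `C * E`). Conversely each of its members is
an arithmetic extension of `S`, so it lies in every arithmetic variety containing `S`. -/

open Pointwise

variable {S : Set ℕ}

namespace IsNumericalSemigroup

theorem mul_mem (hS : IsNumericalSemigroup S) {m : ℕ} (hm : m ∈ S) (k : ℕ) : k * m ∈ S := by
  induction k with
  | zero => simpa using hS.1
  | succ k ih => rw [Nat.succ_mul]; exact hS.2.1 _ ih _ hm

theorem pos_of_notMem (hS : IsNumericalSemigroup S) {d : ℕ} (hd : d ∉ S) : 0 < d :=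
  Nat.pos_of_ne_zero fun h => hd (h ▸ hS.1)

theorem exists_pos_mem (hS : IsNumericalSemigroup S) : ∃ m ∈ S, 0 < m := by
  obtain ⟨m, hmS, hm⟩ := (hS.2.2.infinite_compl.sdiff (Set.finite_singleton 0)).nonempty
  exact ⟨m, by simpa using hmS, Nat.pos_of_ne_zero hm⟩

theorem biInter_numQuot (hS : IsNumericalSemigroup S) (C : Finset ℕ) :
    IsNumericalSemigroup (⋂ c ∈ C, NumQuot S c) := by
  simp only [IsNumericalSemigroup, NumQuot, Set.mem_iInter₂, Set.mem_ofPred_eq]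
  refine ⟨fun c _ => by simpa using hS.1, fun a ha b hb c hc => ?_, ?_⟩
  · rw [Nat.mul_add]
    exact hS.2.1 _ (ha c hc) _ (hb c hc)
  · obtain ⟨N, hN⟩ := hS.2.2.bddAbove
    refine (Set.finite_Iic N).subset fun x hx => ?_
    simp only [Set.mem_compl_iff, Set.mem_iInter₂, not_forall] at hx
    obtain ⟨c, -, hcx⟩ := hx
    have hc : 0 < c := Nat.pos_of_ne_zero (by rintro rfl; simp [hS.1] at hcx)
    calc x ≤ c * x := Nat.le_mul_of_pos_left x hc
      _ ≤ N := hN hcx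

theorem numQuot_eq_univ_of_mem (hS : IsNumericalSemigroup S) {c : ℕ} (hc : c ∈ S) :
    NumQuot S c = Set.univ :=
  Set.eq_univ_of_forall fun x => by simpa [NumQuot, mul_comm] using hS.mul_mem hc x

end IsNumericalSemigroup

theorem setOf_forall_mul_mem_eq_biInter_numQuot (D : Finset ℕ) :
    {x | ∀ d ∈ D, d * x ∈ S} = ⋂ d ∈ D, NumQuot S d := by
  ext x
  simp [NumQuot]

theorem setOf_forall_mul_mem_biInter_numQuot (C E : Finset ℕ) :
    {x | ∀ e ∈ E, e * x ∈ ⋂ c ∈ C, NumQuot S c} = ⋂ c ∈ C * E, NumQuot S c := by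
  ext x
  simp only [NumQuot, Set.mem_iInter₂, Set.mem_ofPred_eq, Finset.mem_mul]
  constructor
  · rintro h _ ⟨c, hc, e, he, rfl⟩
    simpa [mul_assoc] using h e he c hc
  · intro h e he c hc
    simpa [mul_assoc] using h _ ⟨c, hc, e, he, rfl⟩

theorem IsArithmeticExtension.biInter_numQuot {D : Finset ℕ} (hD : D.Nonempty)
    (hpos : ∀ d ∈ D, 0 < d) : IsArithmeticExtension S (⋂ d ∈ D, NumQuot S d) :=
  ⟨D, hD, hpos, (setOf_forall_mul_mem_eq_biInter_numQuot D).symm⟩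

theorem IsArithmeticExtension.univ (hS : IsNumericalSemigroup S) :
    IsArithmeticExtension S Set.univ := by
  obtain ⟨m, hmS, hm⟩ := hS.exists_pos_mem
  simpa [hS.numQuot_eq_univ_of_mem hmS] using
    IsArithmeticExtension.biInter_numQuot (S := S) (Finset.singleton_nonempty m) (by simpa using hm)

def numQuotFamily (S : Set ℕ) : Set (Set ℕ) :=
  {T | ∃ D : Finset ℕ, D.Nonempty ∧ (∀ d ∈ D, d ∉ S) ∧ T = ⋂ d ∈ D, NumQuot S d} ∪ {Set.univ}

theorem mem_numQuotFamily_iff {T : Set ℕ} (hS : IsNumericalSemigroup S) :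
    T ∈ numQuotFamily S ↔ ∃ C : Finset ℕ, T = ⋂ c ∈ C, NumQuot S c := by
  classical
  constructor
  · rintro (⟨D, -, -, rfl⟩ | rfl)
    exacts [⟨D, rfl⟩, ⟨∅, by simp⟩]
  · rintro ⟨C, rfl⟩
    have hfilter : ⋂ c ∈ C, NumQuot S c = ⋂ c ∈ C.filter (· ∉ S), NumQuot S c := by
      ext x
      simp only [Set.mem_iInter₂, Finset.mem_filter]
      refine ⟨fun h c hc => h c hc.1, fun h c hc => ?_⟩
      by_cases hcS : c ∈ S
      · simp [hS.numQuot_eq_univ_of_mem hcS]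
      · exact h c ⟨hc, hcS⟩
    rcases (C.filter (· ∉ S)).eq_empty_or_nonempty with hempty | hne
    · right
      simp [hfilter, hempty]
    · exact Or.inl ⟨_, hne, fun c hc => (Finset.mem_filter.mp hc).2, hfilter⟩

theorem self_mem_numQuotFamily (hS : IsNumericalSemigroup S) : S ∈ numQuotFamily S :=
  (mem_numQuotFamily_iff hS).mpr ⟨{1}, by ext; simp [NumQuot]⟩

theorem isArithmeticVariety_numQuotFamily (hS : IsNumericalSemigroup S) :
    IsArithmeticVariety (numQuotFamily S) := by
  refine ⟨⟨S, self_mem_numQuotFamily hS⟩, ?_, ?_, ?_⟩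
  · intro T hT
    obtain ⟨C, rfl⟩ := (mem_numQuotFamily_iff hS).mp hT
    exact hS.biInter_numQuot C
  · intro T₁ hT₁ T₂ hT₂
    obtain ⟨C₁, rfl⟩ := (mem_numQuotFamily_iff hS).mp hT₁
    obtain ⟨C₂, rfl⟩ := (mem_numQuotFamily_iff hS).mp hT₂
    exact (mem_numQuotFamily_iff hS).mpr ⟨C₁ ∪ C₂, (Finset.set_biInter_inter _ _ _).symm⟩
  · rintro A hA T ⟨E, -, -, rfl⟩
    obtain ⟨C, rfl⟩ := (mem_numQuotFamily_iff hS).mp hA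
    exact (mem_numQuotFamily_iff hS).mpr ⟨C * E, setOf_forall_mul_mem_biInter_numQuot C E⟩

theorem numQuotFamily_subset (hS : IsNumericalSemigroup S) {ℬ : Set (Set ℕ)}
    (hℬ : IsArithmeticVariety ℬ) (hSℬ : S ∈ ℬ) :
    numQuotFamily S ⊆ ℬ := by
  have hext := hℬ.2.2.2 S hSℬ
  rintro T (⟨D, hD, hDS, rfl⟩ | rfl)
  · exact hext _ (.biInter_numQuot hD fun d hd => hS.pos_of_notMem (hDS d hd))
  · exact hext _ (.univ hS)

theorem smallest_variety_of_singleton (S : Set ℕ) (hS : IsNumericalSemigroup S) :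
    IsArithmeticVariety
        ({T | ∃ D : Finset ℕ, D.Nonempty ∧ (∀ d ∈ D, d ∉ S) ∧
            T = ⋂ d ∈ D, NumQuot S d} ∪ {Set.univ}) ∧
      S ∈ ({T | ∃ D : Finset ℕ, D.Nonempty ∧ (∀ d ∈ D, d ∉ S) ∧
            T = ⋂ d ∈ D, NumQuot S d} ∪ {Set.univ}) ∧
      ∀ ℬ : Set (Set ℕ), IsArithmeticVariety ℬ → S ∈ ℬ →
        ({T | ∃ D : Finset ℕ, D.Nonempty ∧ (∀ d ∈ D, d ∉ S) ∧
            T = ⋂ d ∈ D, NumQuot S d} ∪ {Set.univ}) ⊆ ℬ :=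
  ⟨isArithmeticVariety_numQuotFamily hS, self_mem_numQuotFamily hS,
    fun _ hℬ hSℬ => numQuotFamily_subset hS hℬ hSℬ⟩
end

section
/- For a numerical semigroup S, the smallest arithmetic variety containing {S} is exactly the set of arithmetic extensions of S. -/
lemma IsNumericalSemigroup.mul_mem_s8 {S : Set ℕ} (hS : IsNumericalSemigroup S) {x : ℕ}
    (hx : x ∈ S) (d : ℕ) : d * x ∈ S := by
  induction d with
  | zero => simpa using hS.1
  | succ d ih => simpa [Nat.succ_mul] using hS.2.1 _ ih _ hx

namespace IsArithmeticExtension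

open Pointwise

lemma refl (S : Set ℕ) : IsArithmeticExtension S S :=
  ⟨{1}, Finset.singleton_nonempty 1, by simp, by simp⟩

lemma inter {S T₁ T₂ : Set ℕ} (h₁ : IsArithmeticExtension S T₁)
    (h₂ : IsArithmeticExtension S T₂) : IsArithmeticExtension S (T₁ ∩ T₂) := by
  obtain ⟨D₁, hD₁, hpos₁, rfl⟩ := h₁
  obtain ⟨D₂, -, hpos₂, rfl⟩ := h₂
  refine ⟨D₁ ∪ D₂, hD₁.mono Finset.subset_union_left, Finset.forall_mem_union.2 ⟨hpos₁, hpos₂⟩, ?_⟩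
  ext x
  exact Finset.forall_mem_union.symm

lemma trans {S T U : Set ℕ} (hT : IsArithmeticExtension S T)
    (hU : IsArithmeticExtension T U) : IsArithmeticExtension S U := by
  obtain ⟨D, hD, hposD, rfl⟩ := hT
  obtain ⟨E, hE, hposE, rfl⟩ := hU
  refine ⟨D * E, hD.mul hE, ?_, ?_⟩
  · simp only [Finset.mem_mul]
    rintro _ ⟨d, hd, e, he, rfl⟩
    exact Nat.mul_pos (hposD d hd) (hposE e he)
  · ext x
    simp only [Set.mem_ofPred_eq, Finset.mem_mul, forall_exists_index, and_imp]
    constructor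
    · rintro h _ d hd e he rfl
      simpa [mul_assoc] using h e he d hd
    · intro h e he d hd
      simpa [mul_assoc] using h _ d hd e he rfl

lemma superset {S T : Set ℕ} (hS : IsNumericalSemigroup S) (hT : IsArithmeticExtension S T) :
    S ⊆ T := by
  obtain ⟨D, -, -, rfl⟩ := hT
  exact fun x hx d _ => hS.mul_mem_s8 hx d

lemma isNumericalSemigroup {S T : Set ℕ} (hS : IsNumericalSemigroup S)
    (hT : IsArithmeticExtension S T) : IsNumericalSemigroup T := by
  refine ⟨?_, ?_, hS.2.2.subset (Set.compl_subset_compl.2 (hT.superset hS))⟩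
  all_goals obtain ⟨D, -, -, rfl⟩ := hT
  · exact fun d _ => by simpa using hS.1
  · exact fun a ha b hb d hd => by simpa [Nat.mul_add] using hS.2.1 _ (ha d hd) _ (hb d hd)

end IsArithmeticExtension

lemma isArithmeticVariety_setOf_isArithmeticExtension {S : Set ℕ}
    (hS : IsNumericalSemigroup S) : IsArithmeticVariety {T | IsArithmeticExtension S T} :=
  ⟨⟨S, .refl S⟩, fun _ hT => hT.isNumericalSemigroup hS, fun _ h₁ _ h₂ => h₁.inter h₂,
    fun _ hT _ hU => hT.trans hU⟩

theorem smallest_variety_eq_arithmeticExtensions (S : Set ℕ)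
    (hS : IsNumericalSemigroup S) :
    ⋂₀ {𝒜 : Set (Set ℕ) | IsArithmeticVariety 𝒜 ∧ S ∈ 𝒜} =
      {T | IsArithmeticExtension S T} := by
  refine Set.Subset.antisymm ?_ ?_
  · exact Set.sInter_subset_of_mem ⟨isArithmeticVariety_setOf_isArithmeticExtension hS, .refl S⟩
  · rintro T hT 𝒜 ⟨h𝒜, hS𝒜⟩
    exact h𝒜.2.2.2 S hS𝒜 T hT
end

section
/- The set of numerical semigroups T with T/2 = ℕ is exactly {⟨2, 2n+1⟩ : n ∈ ℕ}, i.e., the numerical semigroups generated by 2 and an odd positive number. -/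
/-!
If every even number lies in `T`, then `T` is determined by its least odd element `m`: an odd
`x ≥ m` is `m` plus an even number, and no odd `x < m` lies in `T`. Hence
`T = {x | x even ∨ m ≤ x}`, which is exactly the set of sums `2i + j m`. Finiteness of the
complement is what guarantees that `T` has an odd element at all.
-/

lemma coe_closure_two_odd (n : ℕ) :
    ((AddSubmonoid.closure {2, 2 * n + 1} : AddSubmonoid ℕ) : Set ℕ) =
      {x | x % 2 = 0 ∨ 2 * n + 1 ≤ x} := by
  ext x
  simp only [SetLike.mem_coe, AddSubmonoid.mem_closure_pair, smul_eq_mul, Set.mem_ofPred_eq]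
  constructor
  · rintro ⟨i, j, rfl⟩
    rcases j with _ | j
    · left; omega
    · right; nlinarith
  · intro hx
    rcases Nat.mod_two_eq_zero_or_one x with heven | hodd
    · exact ⟨x / 2, 0, by omega⟩
    · exact ⟨(x - (2 * n + 1)) / 2, 1, by omega⟩

lemma AddSubmonoid.isNumericalSemigroup {S : AddSubmonoid ℕ} (h : (S : Set ℕ)ᶜ.Finite) :
    IsNumericalSemigroup S :=
  ⟨S.zero_mem, fun _ ha _ hb => S.add_mem ha hb, h⟩

lemma IsNumericalSemigroup.exists_min_odd_mem {T : Set ℕ} (hT : IsNumericalSemigroup T) :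
    ∃ m ∈ T, m % 2 = 1 ∧ ∀ x ∈ T, x % 2 = 1 → m ≤ x := by
  classical
  obtain ⟨N, hN⟩ := hT.2.2.bddAbove
  have hodd : ∃ x, x ∈ T ∧ x % 2 = 1 :=
    ⟨2 * N + 1, by_contra fun h => by have := hN h; omega, by omega⟩
  exact ⟨Nat.find hodd, (Nat.find_spec hodd).1, (Nat.find_spec hodd).2,
    fun x hx hx1 => Nat.find_min' hodd ⟨hx, hx1⟩⟩

lemma eq_setOf_even_or_le_of_forall_two_mul_mem {T : Set ℕ} (hadd : ∀ a ∈ T, ∀ b ∈ T, a + b ∈ T)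
    (heven : ∀ x, 2 * x ∈ T) {m : ℕ} (hmT : m ∈ T) (hm : m % 2 = 1)
    (hmin : ∀ x ∈ T, x % 2 = 1 → m ≤ x) :
    T = {x | x % 2 = 0 ∨ m ≤ x} := by
  ext x
  rcases Nat.mod_two_eq_zero_or_one x with heven_x | hodd_x
  · simpa [heven_x, show 2 * (x / 2) = x by omega] using heven (x / 2)
  · simp only [Set.mem_ofPred_eq, hodd_x, one_ne_zero, false_or]
    refine ⟨(hmin x · hodd_x), fun hle => ?_⟩
    simpa [show m + 2 * ((x - m) / 2) = x by omega] using hadd m hmT _ (heven ((x - m) / 2))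

theorem d2_univ (T : Set ℕ) :
    (IsNumericalSemigroup T ∧ NumQuot T 2 = Set.univ) ↔
      ∃ n : ℕ, T = ((AddSubmonoid.closure {2, 2 * n + 1} : AddSubmonoid ℕ) : Set ℕ) := by
  constructor
  · rintro ⟨hT, hquot⟩
    have heven : ∀ x, 2 * x ∈ T := fun x => (Set.ext_iff.mp hquot x).mpr trivial
    obtain ⟨m, hmT, hm, hmin⟩ := hT.exists_min_odd_mem
    refine ⟨m / 2, ?_⟩
    rw [coe_closure_two_odd, show 2 * (m / 2) + 1 = m by omega]
    exact eq_setOf_even_or_le_of_forall_two_mul_mem hT.2.1 heven hmT hm hmin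
  · rintro ⟨n, rfl⟩
    refine ⟨AddSubmonoid.isNumericalSemigroup ?_, ?_⟩
    · refine (Set.finite_Iio (2 * n + 1)).subset fun x hx => ?_
      simp only [coe_closure_two_odd, Set.mem_compl_iff, Set.mem_ofPred_eq, not_or] at hx
      exact Set.mem_Iio.mpr (by omega)
    · ext x
      simp [NumQuot, coe_closure_two_odd]
end

section
/- Let S ⊊ ℕ be a numerical semigroup, m an odd element of S, and H an upper m-set of S. Then the set S(m,H) = {2s : s ∈ S} ∪ {2s+m : s ∈ S} ∪ {2h+m : h ∈ H} is a numerical semigroup satisfying S(m,H)/2 = S. -/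
/-- An upper m-set of S: H ⊆ ℕ \ S with (C1) h+m ∈ S, (C2) h₁+h₂+m ∈ S,
(C3) if h ∈ H, x ∉ S and x - h ∈ S then x ∈ H. -/
def IsUpperMSet (S : Set ℕ) (m : ℕ) (H : Set ℕ) : Prop :=
  H ⊆ Sᶜ ∧ (∀ h ∈ H, h + m ∈ S) ∧ (∀ h₁ ∈ H, ∀ h₂ ∈ H, h₁ + h₂ + m ∈ S) ∧
    (∀ h ∈ H, ∀ x : ℕ, x ∉ S → h ≤ x → x - h ∈ S → x ∈ H)

/-- S(m,H) = 2S ∪ (2S + m) ∪ (2H + m). -/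
def DupSet (S : Set ℕ) (m : ℕ) (H : Set ℕ) : Set ℕ :=
  {y | ∃ s ∈ S, y = 2 * s} ∪ {y | ∃ s ∈ S, y = 2 * s + m} ∪ {y | ∃ h ∈ H, y = 2 * h + m}


section

variable {S H : Set ℕ} {m : ℕ}

lemma two_mul_mem_dupSet {s : ℕ} (hs : s ∈ S) : 2 * s ∈ DupSet S m H :=
  Or.inl (Or.inl ⟨s, hs, rfl⟩)

lemma two_mul_add_mem_dupSet {s : ℕ} (hs : s ∈ S) : 2 * s + m ∈ DupSet S m H :=
  Or.inl (Or.inr ⟨s, hs, rfl⟩)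

lemma two_mul_add_mem_dupSet_of_mem {h : ℕ} (hh : h ∈ H) : 2 * h + m ∈ DupSet S m H :=
  Or.inr ⟨h, hh, rfl⟩

/-- This is where (C3) enters: `s + h` is either in `S` or, lying above `h ∈ H` by an element
of `S`, in `H`. -/
lemma IsUpperMSet.two_mul_add_add_mem_dupSet (hH : IsUpperMSet S m H) {s h : ℕ}
    (hs : s ∈ S) (hh : h ∈ H) : 2 * (s + h) + m ∈ DupSet S m H := by
  by_cases hsh : s + h ∈ S
  · exact two_mul_add_mem_dupSet hsh
  · refine two_mul_add_mem_dupSet_of_mem (hH.2.2.2 h hh _ hsh (Nat.le_add_left h s) ?_)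
    rwa [Nat.add_sub_cancel]

lemma IsUpperMSet.add_mem_dupSet (hSadd : ∀ a ∈ S, ∀ b ∈ S, a + b ∈ S) (hm : m ∈ S)
    (hH : IsUpperMSet S m H) {a b : ℕ} (ha : a ∈ DupSet S m H) (hb : b ∈ DupSet S m H) :
    a + b ∈ DupSet S m H := by
  obtain ⟨-, hC1, hC2, -⟩ := id hH
  rcases ha with (⟨s, hs, rfl⟩ | ⟨s, hs, rfl⟩) | ⟨h, hh, rfl⟩ <;>
    rcases hb with (⟨t, ht, rfl⟩ | ⟨t, ht, rfl⟩) | ⟨g, hg, rfl⟩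
  · convert two_mul_mem_dupSet (hSadd s hs t ht) using 1; ring
  · convert two_mul_add_mem_dupSet (hSadd s hs t ht) using 1; ring
  · convert hH.two_mul_add_add_mem_dupSet hs hg using 1; ring
  · convert two_mul_add_mem_dupSet (hSadd s hs t ht) using 1; ring
  · convert two_mul_mem_dupSet (hSadd _ (hSadd s hs t ht) m hm) using 1; ring
  · convert two_mul_mem_dupSet (hSadd s hs _ (hC1 g hg)) using 1; ring
  · convert hH.two_mul_add_add_mem_dupSet ht hh using 1; ring
  · convert two_mul_mem_dupSet (hSadd t ht _ (hC1 h hh)) using 1; ring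
  · convert two_mul_mem_dupSet (hC2 h hh g hg) using 1; ring

/-- An even number `2j` is missing from `S(m,H)` only if `j ∉ S`, and an odd number `y ≥ m`
only if `(y - m) / 2 ∉ S`. -/
lemma dupSet_compl_finite (hodd : Odd m) (hfin : Sᶜ.Finite) : (DupSet S m H)ᶜ.Finite := by
  refine ((hfin.image (2 * ·)).union
    ((Set.finite_Iio m).union (hfin.image (2 * · + m)))).subset ?_
  intro y hy
  obtain ⟨j, rfl | rfl⟩ := Nat.even_or_odd' y
  · exact Or.inl ⟨j, fun hj => hy (two_mul_mem_dupSet hj), rfl⟩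
  · refine Or.inr ?_
    by_cases hym : 2 * j + 1 < m
    · exact Or.inl hym
    · obtain ⟨k, rfl⟩ := hodd
      refine Or.inr ⟨j - k, fun hj => hy ?_, by dsimp only; omega⟩
      convert two_mul_add_mem_dupSet hj using 1
      omega

lemma numQuot_dupSet_two (hodd : Odd m) : NumQuot (DupSet S m H) 2 = S := by
  ext x
  refine ⟨?_, two_mul_mem_dupSet⟩
  rintro ((⟨s, hs, he⟩ | ⟨s, hs, he⟩) | ⟨h, hh, he⟩)
  · rwa [Nat.mul_left_cancel two_pos he]
  all_goals obtain ⟨k, rfl⟩ := hodd; omega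

end

theorem dupSet_isNumericalSemigroup_and_quot_general (S : Set ℕ)
    (hS : IsNumericalSemigroup S)
    (m : ℕ) (hm : m ∈ S) (hodd : Odd m) (H : Set ℕ) (hH : IsUpperMSet S m H) :
    IsNumericalSemigroup (DupSet S m H) ∧ NumQuot (DupSet S m H) 2 = S := by
  obtain ⟨hS0, hSadd, hSfin⟩ := hS
  refine ⟨⟨?_, fun a ha b hb => hH.add_mem_dupSet hSadd hm ha hb,
    dupSet_compl_finite hodd hSfin⟩, numQuot_dupSet_two hodd⟩
  simpa using two_mul_mem_dupSet (m := m) (H := H) hS0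

theorem dupSet_isNumericalSemigroup_and_quot (S : Set ℕ)
    (hS : IsNumericalSemigroup S) (hS' : S ≠ Set.univ)
    (m : ℕ) (hm : m ∈ S) (hodd : Odd m) (H : Set ℕ) (hH : IsUpperMSet S m H) :
    IsNumericalSemigroup (DupSet S m H) ∧ NumQuot (DupSet S m H) 2 = S :=
  dupSet_isNumericalSemigroup_and_quot_general S hS m hm hodd H hH
end

section
/- Let S ⊊ ℕ be a numerical semigroup and m an odd element of S. Then ℕ \ S is an upper m-set of S if and only if m > F(S). -/
/-!
If m > F(S), every h ∉ S has h + m > F(S) and h₁ + h₂ + m > F(S), so (C1) and (C2) hold, and (C3)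
is automatic for H = ℕ \ S. Conversely, if (C1) holds for ℕ \ S, no gap x can satisfy x ≥ m: either
x − m ∈ S and x ∈ S by closure under addition, or x − m is a gap and x ∈ S by (C1). Applied to
x = F(S) this gives F(S) < m.
-/

section Frobenius

variable {S : Set ℕ}

theorem frob_mem_compl (hfin : Sᶜ.Finite) (hS : S ≠ Set.univ) : frob S ∈ Sᶜ :=
  (Set.nonempty_compl.mpr hS).csSup_mem hfin

theorem le_frob_of_notMem (hfin : Sᶜ.Finite) {x : ℕ} (hx : x ∉ S) : x ≤ frob S :=
  le_csSup hfin.bddAbove hx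

theorem mem_of_frob_lt (hfin : Sᶜ.Finite) {x : ℕ} (hx : frob S < x) : x ∈ S := by
  by_contra hxS
  exact (le_frob_of_notMem hfin hxS).not_gt hx

theorem lt_of_notMem_of_forall_add_mem (hadd : ∀ a ∈ S, ∀ b ∈ S, a + b ∈ S) {m : ℕ} (hm : m ∈ S)
    (hC1 : ∀ h ∉ S, h + m ∈ S) {x : ℕ} (hx : x ∉ S) : x < m := by
  by_contra! hmx
  have hx' : x - m + m = x := Nat.sub_add_cancel hmx
  by_cases hxm : x - m ∈ S
  · exact hx (hx' ▸ hadd _ hxm _ hm)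
  · exact hx (hx' ▸ hC1 _ hxm)

theorem isUpperMSet_compl_of_frob_lt (hfin : Sᶜ.Finite) {m : ℕ} (hm : frob S < m) :
    IsUpperMSet S m Sᶜ :=
  ⟨subset_rfl, fun _ _ => mem_of_frob_lt hfin (by omega),
    fun _ _ _ _ => mem_of_frob_lt hfin (by omega), fun _ _ _ hx _ _ => hx⟩

end Frobenius

theorem compl_upperMSet_iff_general (S : Set ℕ) (hS : IsNumericalSemigroup S)
    (hS' : S ≠ Set.univ) (m : ℕ) (hm : m ∈ S) :
    IsUpperMSet S m Sᶜ ↔ frob S < m := by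
  obtain ⟨-, hadd, hfin⟩ := hS
  exact ⟨fun ⟨_, hC1, _⟩ => lt_of_notMem_of_forall_add_mem hadd hm hC1 (frob_mem_compl hfin hS'),
    isUpperMSet_compl_of_frob_lt hfin⟩

theorem compl_upperMSet_iff (S : Set ℕ) (hS : IsNumericalSemigroup S)
    (hS' : S ≠ Set.univ) (m : ℕ) (hm : m ∈ S) (hodd : Odd m) :
    IsUpperMSet S m Sᶜ ↔ frob S < m :=
  compl_upperMSet_iff_general S hS hS' m hm
end

section
/- For every natural number q, the set 𝒞_q of numerical semigroups with depth at most q is an arithmetic variety: it contains ℕ, is closed under pairwise intersection, and is closed under quotients S ↦ S/d for all positive integers d. -/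
open Classical in
/-- The depth of a numerical semigroup: ⌊F(S)/m(S)⌋ + 1, with depth(ℕ) = 0. -/
noncomputable def depth (S : Set ℕ) : ℕ :=
  if S = Set.univ then 0 else frob S / mult S + 1

lemma frob_mem {S : Set ℕ} (hf : Sᶜ.Finite) (hne : S ≠ Set.univ) : frob S ∈ Sᶜ := by
  have : Sᶜ.Nonempty := by
    rw [Set.nonempty_compl]; exact hne
  exact Nat.sSup_mem this hf.bddAbove

lemma le_frob {S : Set ℕ} (hf : Sᶜ.Finite) {x : ℕ} (hx : x ∉ S) : x ≤ frob S :=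
  le_csSup hf.bddAbove hx

lemma mult_mem {S : Set ℕ} (hS : IsNumericalSemigroup S) (hne : S ≠ Set.univ) :
    mult S ∈ S \ {0} := by
  apply Nat.sInf_mem
  refine ⟨frob S + 1, ?_, ?_⟩
  · by_contra h
    exact absurd (le_frob hS.2.2 h) (by omega)
  · simp

lemma mult_le {S : Set ℕ} {x : ℕ} (hx : x ∈ S) (hx0 : x ≠ 0) : mult S ≤ x :=
  Nat.sInf_le ⟨hx, hx0⟩

lemma quot_isNS {S : Set ℕ} (hS : IsNumericalSemigroup S) {d : ℕ} (hd : 0 < d) :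
    IsNumericalSemigroup (NumQuot S d) := by
  refine ⟨by simpa [NumQuot] using hS.1, ?_, ?_⟩
  · intro a ha b hb
    have := hS.2.1 _ ha _ hb
    simpa [NumQuot, Nat.mul_add] using this
  · apply Set.Finite.subset (Set.finite_Iic (frob S))
    intro x hx
    have : d * x ∉ S := hx
    have h1 : d * x ≤ frob S := le_frob hS.2.2 this
    have : x ≤ d * x := Nat.le_mul_of_pos_left x hd
    simp only [Set.mem_Iic]; omega

lemma quot_depth_le {S : Set ℕ} (hS : IsNumericalSemigroup S) {d : ℕ} (hd : 0 < d) :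
    depth (NumQuot S d) ≤ depth S := by
  by_cases hq : NumQuot S d = Set.univ
  · simp [depth, hq]
  have hne : S ≠ Set.univ := by
    rintro rfl; exact hq (by simp [NumQuot, Set.eq_univ_iff_forall])
  have hQ : IsNumericalSemigroup (NumQuot S d) := quot_isNS hS hd
  simp only [depth, if_neg hq, if_neg hne]
  have hm := mult_mem hS hne
  have hm' := mult_mem hQ hq
  have hF' := frob_mem hQ.2.2 hq
  set m := mult S
  set m' := mult (NumQuot S d)
  set F := frob S
  set F' := frob (NumQuot S d)
  have hm0 : 0 < m := by have := hm.2; simp at this; omega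
  have hm'0 : 0 < m' := by have := hm'.2; simp at this; omega
  have hdm : m ≤ d * m' := mult_le (hm'.1) (by positivity)
  suffices h : F' / m' < F / m + 1 by omega
  rw [Nat.div_lt_iff_lt_mul hm'0]
  by_contra h
  push_neg at h
  have hdF : d * F' ∉ S := hF'
  have h2 : d * F' ≤ F := le_frob hS.2.2 hdF
  have h3 : (F / m + 1) * m ≤ (F / m + 1) * (d * m') := Nat.mul_le_mul_left _ hdm
  have h4 : (F / m + 1) * (d * m') ≤ d * F' := by
    calc (F / m + 1) * (d * m') = d * ((F / m + 1) * m') := by ring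
    _ ≤ d * F' := Nat.mul_le_mul_left d h
  have h5 : F < (F / m + 1) * m := by
    rw [Nat.add_mul, one_mul]; exact Nat.lt_div_mul_add hm0
  omega

lemma inter_half {A B : Set ℕ} (hA : IsNumericalSemigroup A) (hB : IsNumericalSemigroup B)
    (hAu : A ≠ Set.univ) (hu : A ∩ B ≠ Set.univ) (hNS : IsNumericalSemigroup (A ∩ B))
    (hFA : frob (A ∩ B) ∉ A) : depth (A ∩ B) ≤ depth A := by
  have hF1 : frob (A ∩ B) ≤ frob A := le_frob hA.2.2 hFA
  have hmem := mult_mem hNS hu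
  have hm1 : mult A ≤ mult (A ∩ B) := mult_le hmem.1.1 hmem.2
  have hmA0 : 0 < mult A := by
    have := (mult_mem hA hAu).2; simp at this; omega
  simp only [depth, if_neg hAu, if_neg hu]
  have : frob (A ∩ B) / mult (A ∩ B) ≤ frob A / mult A :=
    le_trans (Nat.div_le_div_left hm1 hmA0) (Nat.div_le_div_right hF1)
  omega

lemma inter_mem {S T : Set ℕ} (hS : IsNumericalSemigroup S) (hT : IsNumericalSemigroup T) :
    IsNumericalSemigroup (S ∩ T) ∧ depth (S ∩ T) ≤ max (depth S) (depth T) := by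
  have hNS : IsNumericalSemigroup (S ∩ T) := by
    refine ⟨⟨hS.1, hT.1⟩, fun a ha b hb => ⟨hS.2.1 _ ha.1 _ hb.1, hT.2.1 _ ha.2 _ hb.2⟩, ?_⟩
    rw [Set.compl_inter]
    exact hS.2.2.union hT.2.2
  refine ⟨hNS, ?_⟩
  by_cases hu : S ∩ T = Set.univ
  · simp [depth, hu]
  by_cases hSu : S = Set.univ
  · subst hSu; rw [Set.univ_inter] at hu ⊢; exact le_max_of_le_right le_rfl
  by_cases hTu : T = Set.univ
  · subst hTu; rw [Set.inter_univ] at hu ⊢; exact le_max_of_le_left le_rfl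
  have hF := frob_mem hNS.2.2 hu
  rw [Set.compl_inter] at hF
  rcases hF with hF | hF
  · exact le_max_of_le_left (inter_half hS hT hSu hu hNS hF)
  · rw [Set.inter_comm] at hu hNS ⊢
    rw [Set.inter_comm] at hF
    exact le_max_of_le_right (inter_half hT hS hTu hu hNS hF)

theorem depth_le_isArithmeticVariety (q : ℕ) :
    Set.univ ∈ {S : Set ℕ | IsNumericalSemigroup S ∧ depth S ≤ q} ∧
      (∀ S ∈ {S : Set ℕ | IsNumericalSemigroup S ∧ depth S ≤ q},
        ∀ T ∈ {S : Set ℕ | IsNumericalSemigroup S ∧ depth S ≤ q},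
          S ∩ T ∈ {S : Set ℕ | IsNumericalSemigroup S ∧ depth S ≤ q}) ∧
      (∀ S ∈ {S : Set ℕ | IsNumericalSemigroup S ∧ depth S ≤ q},
        ∀ d : ℕ, 0 < d →
          NumQuot S d ∈ {S : Set ℕ | IsNumericalSemigroup S ∧ depth S ≤ q}) := by
  have huniv : IsNumericalSemigroup (Set.univ : Set ℕ) ∧ depth (Set.univ : Set ℕ) ≤ q := by
    refine ⟨⟨trivial, fun _ _ _ _ => trivial, by simp⟩, ?_⟩
    simp [depth]
  refine ⟨huniv, ?_, ?_⟩
  · rintro S ⟨hS, hSq⟩ T ⟨hT, hTq⟩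
    obtain ⟨h1, h2⟩ := inter_mem hS hT
    exact ⟨h1, le_trans h2 (max_le hSq hTq)⟩
  · rintro S ⟨hS, hSq⟩ d hd
    exact ⟨quot_isNS hS hd, le_trans (quot_depth_le hS hd) hSq⟩
end
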